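/- arXiv:math/0606642 — 5 statements merged into one kernel-verified Lean document; each statement's English description precedes it below -/
import Mathlib

section
/- Let A be a real linear space of measurable processes on [0,1) with paths bounded on compacts, and X a continuous A-martingale such that X ∈ A, X_0 = 0 and [X,X] = 0. Then X ≡ 0 almost surely. -/
open MeasureTheory Filter Set Topology

noncomputable section

namespace CR

variable {Ω : Type*} [MeasurableSpace Ω]

/-- Regularization `I(ε,Y,X,t) = (1/ε)∫_0^t Y_s (X_{s+ε} - X_s) ds` of the forward integral. -/
def fwdApprox (Y X : ℝ → Ω → ℝ) (ε t : ℝ) (ω : Ω) : ℝ :=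
  (1 / ε) * ∫ s in (0:ℝ)..t, Y s ω * (X (s + ε) ω - X s ω)

/-- `Y` is `X`-forward integrable on `[0,T]`, with forward integral the (continuous in time)
process `L`: for each `t ∈ [0,T]` the regularizations converge in probability to `L t`. -/
def IsForwardIntegral (P : Measure Ω) (Y X : ℝ → Ω → ℝ) (T : ℝ)
    (L : ℝ → Ω → ℝ) : Prop :=
  (∀ ω, ContinuousOn (fun t => L t ω) (Icc 0 T)) ∧
  ∀ t ∈ Icc (0:ℝ) T,
    TendstoInMeasure P (fun ε => fwdApprox Y X ε t) (𝓝[>] (0:ℝ)) (L t)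

/-- Regularization `C(ε,X,Y,t) = (1/ε)∫_0^t (X_{s+ε}-X_s)(Y_{s+ε}-Y_s) ds` of the covariation. -/
def covApprox (X Y : ℝ → Ω → ℝ) (ε t : ℝ) (ω : Ω) : ℝ :=
  (1 / ε) * ∫ s in (0:ℝ)..t, (X (s + ε) ω - X s ω) * (Y (s + ε) ω - Y s ω)

/-- The covariation `[X,Y]` exists on `[0,T]` and equals the (continuous in time) process `C`:
the regularizations converge ucp on `[0,T]` to `C`. -/
def IsCovariation (P : Measure Ω) (X Y : ℝ → Ω → ℝ) (T : ℝ)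
    (C : ℝ → Ω → ℝ) : Prop :=
  (∀ ω, ContinuousOn (fun t => C t ω) (Icc 0 T)) ∧
  TendstoInMeasure P
    (fun ε ω => ⨆ t : Icc (0:ℝ) T, |covApprox X Y ε (t : ℝ) ω - C (t : ℝ) ω|)
    (𝓝[>] (0:ℝ)) 0

/-- `θ` is `X`-improperly forward integrable on `[0,1]` with integral process `L`:
`θ` is `X`-forward integrable on every `[0,t]`, `t < 1`, and the integral converges
almost surely as `t → 1` (to `L 1`). -/
def IsImproperFwd (P : Measure Ω) (θ X : ℝ → Ω → ℝ) (L : ℝ → Ω → ℝ) : Prop :=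
  (∀ t ∈ Ico (0:ℝ) 1, IsForwardIntegral P θ X t L) ∧
  ∀ᵐ ω ∂P, Tendsto (fun t => L t ω) (𝓝[<] (1:ℝ)) (𝓝 (L 1 ω))

/-- `M` is an `A`-martingale under `P`: every `θ ∈ A` is `M`-improperly forward
integrable and `E[∫_0^t θ d⁻M] = 0` for every `t ∈ [0,1]`. -/
def IsAMartingale (P : Measure Ω) (A : Set (ℝ → Ω → ℝ)) (M : ℝ → Ω → ℝ) : Prop :=
  ∀ θ ∈ A, ∃ L : ℝ → Ω → ℝ, IsImproperFwd P θ M L ∧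
    ∀ t ∈ Icc (0:ℝ) 1, Integrable (L t) P ∧ ∫ ω, L t ω ∂P = 0

end CR

/-! The regularizations satisfy the pathwise identity
`C(ε,X,X,t) + 2 I(ε,X,X,t) = (1/ε) ∫_0^t (X_{s+ε}² - X_s²) ds`, and by continuity of the paths
the right side tends to `X_t² - X_0²`. Along a sequence `ε_k → 0` on which both regularizations
converge almost surely this gives `X_t² - X_0² = 2 ∫_0^t X d⁻X + [X,X]_t`. With `X_0 = 0` and
`[X,X] = 0`, the `A`-martingale property applied to `θ = X` yields `E[X_t²] = 0` for `t < 1`;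
continuity of the paths turns `X_t = 0` a.s. at rational times into `X ≡ 0` on `[0,1]` a.s. -/

open intervalIntegral in
theorem tendsto_one_div_mul_integral_sub_comp_add {g : ℝ → ℝ} (hg : Continuous g) (a b : ℝ) :
    Tendsto (fun ε => (1 / ε) * ∫ s in a..b, (g (s + ε) - g s)) (𝓝[>] 0) (𝓝 (g b - g a)) := by
  set F : ℝ → ℝ := fun x => ∫ s in a..x, g s
  have hF : ∀ x, HasDerivAt F (g x) x := fun x => (hg.integral_hasStrictDerivAt a x).hasDerivAt
  have hgi : ∀ x y, IntervalIntegrable g volume x y := fun x y => hg.intervalIntegrable x y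
  have key : ∀ ε, ∫ s in a..b, (g (s + ε) - g s) = (F (b + ε) - F b) - (F (a + ε) - F a) := by
    intro ε
    have hgε : IntervalIntegrable (fun s => g (s + ε)) volume a b :=
      (hg.comp (continuous_add_const ε)).intervalIntegrable a b
    rw [integral_sub hgε (hgi a b),
      integral_comp_add_right, ← integral_interval_sub_left (hgi a (b + ε)) (hgi a (a + ε))]
    simp only [F, integral_same]
    ring
  refine ((hF b).tendsto_slope_zero_right.sub (hF a).tendsto_slope_zero_right).congr fun ε => ?_
  rw [key, smul_eq_mul, smul_eq_mul, add_comm b, add_comm a]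
  ring

open intervalIntegral in
theorem tendsto_one_div_mul_integral_sub_comp_add_of_continuousOn {g : ℝ → ℝ} {a b c : ℝ}
    (hg : ContinuousOn g (Icc a c)) (hab : a ≤ b) (hbc : b < c) :
    Tendsto (fun ε => (1 / ε) * ∫ s in a..b, (g (s + ε) - g s)) (𝓝[>] 0) (𝓝 (g b - g a)) := by
  set g' := IccExtend (hab.trans hbc.le) ((Icc a c).domRestrict g)
  have hg' : EqOn g' g (Icc a c) := fun x hx => IccExtend_of_mem _ _ hx
  have hlim := tendsto_one_div_mul_integral_sub_comp_add (g := g')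
    hg.domRestrict.Icc_extend' a b
  rw [hg' ⟨hab, hbc.le⟩, hg' ⟨le_rfl, hab.trans hbc.le⟩] at hlim
  refine hlim.congr' ?_
  filter_upwards [Ioo_mem_nhdsGT (sub_pos.mpr hbc)] with ε hε
  congr 1
  refine integral_congr fun s hs => ?_
  rw [uIcc_of_le hab] at hs
  rw [hg' ⟨hs.1, hs.2.trans hbc.le⟩, hg' ⟨by linarith [hs.1, hε.1], by linarith [hs.2, hε.2]⟩]

theorem ContinuousOn.comp_add_const_Icc {x : ℝ → ℝ} {a b ε : ℝ}
    (hx : ContinuousOn x (Icc a (b + ε))) (hε : 0 ≤ ε) :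
    ContinuousOn (fun s => x (s + ε)) (Icc a b) :=
  hx.comp (continuousOn_id.add continuousOn_const) fun _ hs =>
    ⟨by linarith [hs.1], by linarith [hs.2]⟩

namespace CR

variable {Ω : Type*} {X Y C : ℝ → Ω → ℝ} {ω : Ω} {ε t : ℝ}

theorem intervalIntegrable_covApprox_integrand (hX : ContinuousOn (X · ω) (Icc 0 (t + ε)))
    (hY : ContinuousOn (Y · ω) (Icc 0 (t + ε))) (ht : 0 ≤ t) (hε : 0 ≤ ε) :
    IntervalIntegrable (fun s => (X (s + ε) ω - X s ω) * (Y (s + ε) ω - Y s ω)) volume 0 t :=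
  have hIcc : Icc 0 t ⊆ Icc 0 (t + ε) := Icc_subset_Icc_right (by linarith)
  (((hX.comp_add_const_Icc hε).sub (hX.mono hIcc)).mul
    ((hY.comp_add_const_Icc hε).sub (hY.mono hIcc))).intervalIntegrable_of_Icc ht

open intervalIntegral in
theorem covApprox_add_two_mul_fwdApprox (hX : ContinuousOn (X · ω) (Icc 0 (t + ε)))
    (ht : 0 ≤ t) (hε : 0 ≤ ε) :
    covApprox X X ε t ω + 2 * fwdApprox X X ε t ω
      = (1 / ε) * ∫ s in (0 : ℝ)..t, (X (s + ε) ω ^ 2 - X s ω ^ 2) := by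
  have hx : ContinuousOn (X · ω) (Icc 0 t) := hX.mono (Icc_subset_Icc_right (by linarith))
  have hfwd : IntervalIntegrable (fun s => X s ω * (X (s + ε) ω - X s ω)) volume 0 t :=
    (hx.mul ((hX.comp_add_const_Icc hε).sub hx)).intervalIntegrable_of_Icc ht
  rw [covApprox, fwdApprox, mul_left_comm, ← mul_add, ← intervalIntegral.integral_const_mul,
    ← integral_add (intervalIntegrable_covApprox_integrand hX hX ht hε) (hfwd.const_mul 2)]
  congr 1
  exact integral_congr fun s _ => by ring

theorem tendsto_covApprox_add_two_mul_fwdApprox {T : ℝ} (hX : ContinuousOn (X · ω) (Icc 0 T))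
    (ht : t ∈ Ico 0 T) :
    Tendsto (fun ε => covApprox X X ε t ω + 2 * fwdApprox X X ε t ω) (𝓝[>] 0)
      (𝓝 (X t ω ^ 2 - X 0 ω ^ 2)) := by
  refine (tendsto_one_div_mul_integral_sub_comp_add_of_continuousOn (hX.pow 2) ht.1 ht.2).congr' ?_
  filter_upwards [Ioo_mem_nhdsGT (sub_pos.mpr ht.2)] with ε hε
  exact (covApprox_add_two_mul_fwdApprox (hX.mono (Icc_subset_Icc_right (by linarith [hε.2])))
    ht.1 hε.1.le).symm

open intervalIntegral in
theorem continuousOn_covApprox (hX : ContinuousOn (X · ω) (Icc 0 (t + ε)))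
    (hY : ContinuousOn (Y · ω) (Icc 0 (t + ε))) (ht : 0 ≤ t) (hε : 0 ≤ ε) :
    ContinuousOn (fun p => covApprox X Y ε p ω) (Icc 0 t) := by
  have h := continuousOn_primitive_interval'
    (intervalIntegrable_covApprox_integrand hX hY ht hε) left_mem_uIcc
  rw [uIcc_of_le ht] at h
  exact continuousOn_const.mul h

theorem abs_covApprox_sub_le_iSup (hX : ContinuousOn (X · ω) (Icc 0 (t + ε)))
    (hY : ContinuousOn (Y · ω) (Icc 0 (t + ε))) (hC : ContinuousOn (C · ω) (Icc 0 t))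
    (hε : 0 ≤ ε) {p : ℝ} (hp : p ∈ Icc 0 t) :
    |covApprox X Y ε p ω - C p ω| ≤ ⨆ q : Icc (0 : ℝ) t, |covApprox X Y ε q ω - C q ω| := by
  have hcont := ((continuousOn_covApprox hX hY (hp.1.trans hp.2) hε).sub hC).abs
  -- `⨆` of a family unbounded above is the junk value `0`, hence the compactness argument.
  have hbdd := isCompact_Icc.bddAbove_image hcont
  rw [image_eq_range] at hbdd
  exact le_ciSup hbdd ⟨p, hp⟩

theorem tendsto_covApprox_of_tendsto_iSup {ι : Type*} {l : Filter ι} {e : ι → ℝ} {T : ℝ}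
    (hX : ContinuousOn (X · ω) (Icc 0 T)) (hY : ContinuousOn (Y · ω) (Icc 0 T))
    (hC : ContinuousOn (C · ω) (Icc 0 t)) (htT : t < T) (he : Tendsto e l (𝓝[>] 0))
    (hsup : Tendsto (fun i => ⨆ q : Icc (0 : ℝ) t, |covApprox X Y (e i) q ω - C q ω|) l (𝓝 0))
    {p : ℝ} (hp : p ∈ Icc 0 t) :
    Tendsto (fun i => covApprox X Y (e i) p ω) l (𝓝 (C p ω)) := by
  rw [tendsto_iff_norm_sub_tendsto_zero]
  refine squeeze_zero' (Eventually.of_forall fun _ => norm_nonneg _) ?_ hsup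
  filter_upwards [he (Ioo_mem_nhdsGT (sub_pos.mpr htT))] with i hi
  have hIcc : Icc 0 (t + e i) ⊆ Icc 0 T := Icc_subset_Icc_right (by linarith [hi.2])
  exact abs_covApprox_sub_le_iSup (hX.mono hIcc) (hY.mono hIcc) hC hi.1.le hp

theorem ae_sq_sub_sq_eq_two_mul_add [MeasurableSpace Ω] {P : Measure Ω} {L : ℝ → Ω → ℝ}
    {T : ℝ} (hX : ∀ ω, ContinuousOn (X · ω) (Icc 0 T)) (ht : t ∈ Ico 0 T)
    (hL : IsForwardIntegral P X X t L) (hC : IsCovariation P X X t C) :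
    ∀ᵐ ω ∂P, X t ω ^ 2 - X 0 ω ^ 2 = 2 * L t ω + C t ω := by
  obtain ⟨εs, hεs, hfwd⟩ := (hL.2 t ⟨ht.1, le_rfl⟩).exists_seq_tendsto_ae'
  obtain ⟨ks, hks, hsup⟩ := (hC.2.comp hεs).exists_seq_tendsto_ae
  have hε : Tendsto (fun k => εs (ks k)) atTop (𝓝[>] 0) := hεs.comp hks.tendsto_atTop
  filter_upwards [hfwd, hsup] with ω hfwd hsup
  have hcov : Tendsto (fun k => covApprox X X (εs (ks k)) t ω) atTop (𝓝 (C t ω)) :=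
    tendsto_covApprox_of_tendsto_iSup (hX ω) (hX ω) (hC.1 ω) ht.2 hε hsup ⟨ht.1, le_rfl⟩
  refine tendsto_nhds_unique ((tendsto_covApprox_add_two_mul_fwdApprox (hX ω) ht).comp hε) ?_
  rw [add_comm]
  exact hcov.add ((hfwd.comp hks.tendsto_atTop).const_mul 2)

end CR

theorem ae_eq_zero_of_integral_sq_eq_zero {Ω : Type*} [MeasurableSpace Ω] {P : Measure Ω}
    {f : Ω → ℝ} (hf : Integrable (fun ω => f ω ^ 2) P) (h : ∫ ω, f ω ^ 2 ∂P = 0) :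
    f =ᵐ[P] 0 := by
  filter_upwards [(integral_eq_zero_iff_of_nonneg (fun ω => sq_nonneg (f ω)) hf).mp h] with ω hω
  exact pow_eq_zero_iff two_ne_zero |>.mp hω

theorem ae_forall_Icc_eq_zero_of_forall_Ioo {Ω : Type*} [MeasurableSpace Ω] {P : Measure Ω}
    {X : ℝ → Ω → ℝ} {a b : ℝ} (hab : a < b) (hX : ∀ ω, ContinuousOn (X · ω) (Icc a b))
    (h : ∀ t ∈ Ioo a b, ∀ᵐ ω ∂P, X t ω = 0) :
    ∀ᵐ ω ∂P, ∀ t ∈ Icc a b, X t ω = 0 := by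
  set D := Ioo a b ∩ range ((↑) : ℚ → ℝ)
  have hD : ∀ᵐ ω ∂P, ∀ t ∈ D, X t ω = 0 :=
    (ae_ball_iff ((countable_range _).mono inter_subset_right)).mpr fun t ht => h t ht.1
  have hdense : Icc a b ⊆ closure D := by
    rw [← closure_Ioo hab.ne]
    exact closure_minimal (Rat.denseRange_cast.open_subset_closure_inter isOpen_Ioo)
      isClosed_closure
  filter_upwards [hD] with ω hω
  exact EqOn.of_subset_closure hω (hX ω) continuousOn_const
    (inter_subset_left.trans Ioo_subset_Icc_self) hdense

open CR in
theorem stmt5_amartingale_zero_general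
    {Ω : Type*} [MeasurableSpace Ω] (P : Measure Ω)
    (A : Set (ℝ → Ω → ℝ))
    (X : ℝ → Ω → ℝ)
    (hXc : ∀ ω, ContinuousOn (fun t => X t ω) (Icc 0 1))
    (hXA : X ∈ A) (hX0 : ∀ ω, X 0 ω = 0)
    (hAmart : IsAMartingale P A X)
    (hqv : ∀ t ∈ Ico (0:ℝ) 1, IsCovariation P X X t (fun _ _ => 0)) :
    ∀ᵐ ω ∂P, ∀ t ∈ Icc (0:ℝ) 1, X t ω = 0 := by
  obtain ⟨L, ⟨hfwd, -⟩, hmart⟩ := hAmart X hXA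
  refine ae_forall_Icc_eq_zero_of_forall_Ioo zero_lt_one hXc fun t ht => ?_
  have htI : t ∈ Ico (0 : ℝ) 1 := ⟨ht.1.le, ht.2⟩
  have hsq : (fun ω => X t ω ^ 2) =ᵐ[P] fun ω => 2 * L t ω := by
    filter_upwards [ae_sq_sub_sq_eq_two_mul_add hXc htI (hfwd t htI) (hqv t htI)] with ω h
    simpa [hX0] using h
  obtain ⟨hint, hmean⟩ := hmart t ⟨ht.1.le, ht.2.le⟩
  refine ae_eq_zero_of_integral_sq_eq_zero ((hint.const_mul 2).congr hsq.symm) ?_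
  rw [integral_congr_ae hsq, integral_const_mul, hmean, mul_zero]

open CR in
/-- let `A` be a real linear space of measurable processes on `[0,1)` with
paths bounded on compacts, and `X` a continuous `A`-martingale with `X ∈ A`, `X_0 = 0`
and `[X,X] = 0`.  Then `X ≡ 0` almost surely. -/
theorem stmt5_amartingale_zero
    {Ω : Type*} [MeasurableSpace Ω] (P : Measure Ω) [IsProbabilityMeasure P]
    (A : Set (ℝ → Ω → ℝ))
    (hmeas : ∀ θ ∈ A, ∀ ω, Measurable fun t => θ t ω)
    (hbdd : ∀ θ ∈ A, ∀ ω, ∀ t ∈ Ico (0:ℝ) 1, ∃ C, ∀ s ∈ Icc (0:ℝ) t, |θ s ω| ≤ C)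
    (hlin : ∀ θ ∈ A, ∀ η ∈ A, ∀ a b : ℝ, (fun t ω => a * θ t ω + b * η t ω) ∈ A)
    (X : ℝ → Ω → ℝ)
    (hXc : ∀ ω, ContinuousOn (fun t => X t ω) (Icc 0 1))
    (hXA : X ∈ A) (hX0 : ∀ ω, X 0 ω = 0)
    (hAmart : IsAMartingale P A X)
    (hqv : ∀ t ∈ Ico (0:ℝ) 1, IsCovariation P X X t (fun _ _ => 0)) :
    ∀ᵐ ω ∂P, ∀ t ∈ Icc (0:ℝ) 1, X t ω = 0 :=
  stmt5_amartingale_zero_general P A X hXc hXA hX0 hAmart hqv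
end
end

section
/- Let A be a class of processes containing all bounded processes measurable with respect to the predictable σ-algebra of a filtration F, and let X be a continuous A-martingale adapted to F with X_t integrable for each t. Then X is an F-martingale. -/
open MeasureTheory Filter Set Topology

noncomputable section

namespace CR

/-- The predictable σ-algebra `P(𝓕)` on `ℝ × Ω`: the σ-algebra generated by all
left-continuous `𝓕`-adapted processes. -/
def predictableSigma {Ω : Type*} [m0 : MeasurableSpace Ω] (𝓕 : Filtration ℝ m0) :
    MeasurableSpace (ℝ × Ω) :=
  ⨆ (f : ℝ → Ω → ℝ) (_ : Adapted 𝓕 (fun t => f t) ∧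
      ∀ ω t, ContinuousWithinAt (fun s => f s ω) (Iio t) t),
    MeasurableSpace.comap (fun p : ℝ × Ω => f p.1 p.2) (borel ℝ)

end CR

/-! For `B ∈ 𝓕 s` the process `θ = 𝟙_B 𝟙_(s,t]` is bounded, adapted and left-continuous, hence
predictable, so it lies in `A`. Pathwise, its forward regularization
`(1/ε) ∫_0^u θ_r (X_{r+ε} - X_r) dr` is a difference of two averages of the continuous path
over intervals of length `ε`, and converges to `𝟙_B (X_{s ∨ (u ∧ t)} - X_s)`. Limits in probability
are a.s. unique, so this is `∫_0^u θ d⁻X`, and the `A`-martingale property gives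
`E[𝟙_B (X_t - X_s)] = 0` for every `B ∈ 𝓕 s`, which characterizes `E[X_t | 𝓕 s] = X_s`. -/

theorem tendsto_one_div_mul_integral_nhdsGT {f : ℝ → ℝ} {a b m : ℝ}
    (hf : ContinuousOn f (Icc a b)) (hm : m ∈ Ico a b) :
    Tendsto (fun ε => 1 / ε * ∫ r in m..m + ε, f r) (𝓝[>] 0) (𝓝 (f m)) := by
  have hIcc : Icc a b ∈ 𝓝[>] m := Icc_mem_nhdsGT_of_mem hm
  have hderiv : HasDerivWithinAt (fun u => ∫ r in m..u, f r) (f m) (Ici m) m :=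
    intervalIntegral.integral_hasDerivWithinAt_right (by simp)
      ((hf.stronglyMeasurableAtFilter_nhdsWithin measurableSet_Icc m).filter_mono
        (nhdsWithin_le_of_mem hIcc))
      ((hf.continuousWithinAt (Ico_subset_Icc_self hm)).mono_of_mem_nhdsWithin hIcc)
  rw [hasDerivWithinAt_iff_tendsto_slope, Ici_sdiff_left] at hderiv
  have hshift : Tendsto (m + ·) (𝓝[>] 0) (𝓝[>] m) :=
    tendsto_nhdsWithin_of_tendsto_nhds_of_eventually_within _
      ((continuous_const_add m).tendsto' 0 m (add_zero m) |>.mono_left nhdsWithin_le_nhds)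
      (eventually_mem_nhdsWithin.mono fun ε hε => lt_add_of_pos_right m hε)
  refine (hderiv.comp hshift).congr fun ε => ?_
  simp [slope_def_field, div_eq_inv_mul]

theorem tendsto_one_div_mul_integral_increment {f : ℝ → ℝ} {a b s m : ℝ}
    (hf : ContinuousOn f (Icc a b)) (has : a ≤ s) (hsm : s ≤ m) (hmb : m < b) :
    Tendsto (fun ε => 1 / ε * ∫ r in s..m, (f (r + ε) - f r)) (𝓝[>] 0) (𝓝 (f m - f s)) := by
  have hint : ∀ x ∈ Icc a b, ∀ y ∈ Icc a b, IntervalIntegrable f volume x y :=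
    fun x hx y hy => (hf.mono (uIcc_subset_Icc hx hy)).intervalIntegrable
  have heq : (fun ε => (1 / ε * ∫ r in m..m + ε, f r) - 1 / ε * ∫ r in s..s + ε, f r)
      =ᶠ[𝓝[>] 0] fun ε => 1 / ε * ∫ r in s..m, (f (r + ε) - f r) := by
    filter_upwards [Ioo_mem_nhdsGT (sub_pos.2 hmb)] with ε ⟨hε0, hεb⟩
    have hmem : ∀ x, s ≤ x → x ≤ m + ε → x ∈ Icc a b :=
      fun x h1 h2 => ⟨has.trans h1, by linarith⟩
    have hshift : IntervalIntegrable (fun r => f (r + ε)) volume s m := by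
      simpa using (hint (s + ε) (hmem _ (by linarith) (by linarith)) (m + ε)
        (hmem _ (by linarith) le_rfl)).comp_add_right ε
    rw [intervalIntegral.integral_sub hshift (hint s (hmem _ le_rfl (by linarith)) m
        (hmem _ hsm (by linarith))), intervalIntegral.integral_comp_add_right f ε,
      intervalIntegral.integral_interval_sub_interval_comm
        (hint _ (hmem _ (by linarith) (by linarith)) _ (hmem _ (by linarith) le_rfl))
        (hint _ (hmem _ le_rfl (by linarith)) _ (hmem _ hsm (by linarith)))
        (hint _ (hmem _ (by linarith) (by linarith)) _ (hmem _ le_rfl (by linarith))),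
      intervalIntegral.integral_symm s, intervalIntegral.integral_symm m]
    ring
  exact ((tendsto_one_div_mul_integral_nhdsGT hf ⟨has.trans hsm, hmb⟩).sub
    (tendsto_one_div_mul_integral_nhdsGT hf ⟨has, hsm.trans_lt hmb⟩)).congr' heq

theorem integral_indicator_Ioc_mul {g : ℝ → ℝ} {s t u : ℝ} (hs : 0 ≤ s) (hu : 0 ≤ u) (c : ℝ) :
    ∫ r in 0..u, (Ioc s t).indicator (fun _ => c) r * g r
      = c * ∫ r in s..max s (min u t), g r := by
  have hset : Ioc 0 u ∩ Ioc s t = Ioc s (max s (min u t)) := by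
    rw [Ioc_inter_Ioc, max_eq_right hs]
    rcases le_total s (min u t) with h | h
    · rw [max_eq_right h]
    · rw [Ioc_eq_empty (not_lt.2 h), max_eq_left h, Ioc_self]
  simp_rw [← indicator_mul_left]
  rw [intervalIntegral.integral_of_le hu, setIntegral_indicator measurableSet_Ioc, hset,
    ← intervalIntegral.integral_of_le (le_max_left _ _), intervalIntegral.integral_const_mul]

theorem continuousWithinAt_Iio_indicator_Ioc {β : Type*} [Zero β] [TopologicalSpace β]
    (c : β) (s t r₀ : ℝ) :
    ContinuousWithinAt ((Ioc s t).indicator fun _ => c) (Iio r₀) r₀ := by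
  have hIoi : ∀ᶠ r in 𝓝[<] r₀, (s < r ↔ s < r₀) := by
    rcases le_or_gt r₀ s with h | h
    · filter_upwards [self_mem_nhdsWithin] with r (hr : r < r₀)
      exact iff_of_false (by linarith) (by linarith)
    · filter_upwards [Ioo_mem_nhdsLT h] with r hr
      exact iff_of_true hr.1 h
  have hIic : ∀ᶠ r in 𝓝[<] r₀, (r ≤ t ↔ r₀ ≤ t) := by
    rcases le_or_gt r₀ t with h | h
    · filter_upwards [self_mem_nhdsWithin] with r (hr : r < r₀)
      exact iff_of_true (by linarith) h
    · filter_upwards [Ioo_mem_nhdsLT h] with r hr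
      exact iff_of_false (by linarith [hr.1]) (by linarith)
  refine continuousWithinAt_const.congr_of_eventuallyEq ?_ rfl
  filter_upwards [hIoi, hIic] with r h1 h2
  simp only [indicator, mem_Ioc, h1, h2]

theorem MeasureTheory.TendstoInMeasure.ae_eq_of_tendsto {Ω ι E : Type*} [MeasurableSpace Ω]
    [MetricSpace E] {P : Measure Ω}
    {l : Filter ι} [l.NeBot] [l.IsCountablyGenerated] {f : ι → Ω → E} {g h : Ω → E}
    (hfg : TendstoInMeasure P f l g) (hfh : ∀ᵐ ω ∂P, Tendsto (fun i => f i ω) l (𝓝 (h ω))) :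
    g =ᵐ[P] h := by
  obtain ⟨ns, hns, hae⟩ := hfg.exists_seq_tendsto_ae'
  filter_upwards [hae, hfh] with ω hg hh
  exact tendsto_nhds_unique hg (hh.comp hns)

namespace CR

variable {Ω : Type*}

def elementaryIntegrand (B : Set Ω) (s t : ℝ) : ℝ → Ω → ℝ :=
  fun r ω => (Ioc s t).indicator (fun _ => B.indicator 1 ω) r

theorem tendsto_fwdApprox_elementaryIntegrand {X : ℝ → Ω → ℝ} {T : ℝ} {ω : Ω}
    (hX : ContinuousOn (fun r => X r ω) (Icc 0 T)) (B : Set Ω) {s t u : ℝ} (hs : 0 ≤ s)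
    (hsT : s < T) (hu : u ∈ Ico 0 T) :
    Tendsto (fun ε => fwdApprox (elementaryIntegrand B s t) X ε u ω) (𝓝[>] 0)
      (𝓝 (B.indicator 1 ω * (X (max s (min u t)) ω - X s ω))) := by
  simp only [fwdApprox, elementaryIntegrand, integral_indicator_Ioc_mul hs hu.1,
    mul_left_comm _ (B.indicator 1 ω)]
  exact (tendsto_one_div_mul_integral_increment hX hs (le_max_left _ _)
    (max_lt hsT ((min_le_left _ _).trans_lt hu.2))).const_mul _

theorem IsImproperFwd.elementaryIntegrand_ae_eq_of_lt_one [MeasurableSpace Ω] {P : Measure Ω}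
    {X L : ℝ → Ω → ℝ} {B : Set Ω} {s t : ℝ} (hL : IsImproperFwd P (elementaryIntegrand B s t) X L)
    (hX : ∀ ω, ContinuousOn (fun r => X r ω) (Icc 0 1)) (hs : 0 ≤ s) (hs1 : s < 1) {u : ℝ}
    (hu : u ∈ Ico 0 1) :
    L u =ᵐ[P] fun ω => B.indicator 1 ω * (X (max s (min u t)) ω - X s ω) :=
  TendstoInMeasure.ae_eq_of_tendsto ((hL.1 u hu).2 u ⟨hu.1, le_rfl⟩)
    (.of_forall fun ω => tendsto_fwdApprox_elementaryIntegrand (hX ω) B hs hs1 hu)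

/-- At `u = 1` the integral is only the a.s. left limit, so the identity passes to the limit
along a sequence `v n ↑ 1`. -/
theorem IsImproperFwd.elementaryIntegrand_ae_eq [MeasurableSpace Ω] {P : Measure Ω}
    {X L : ℝ → Ω → ℝ} {B : Set Ω} {s t : ℝ} (hL : IsImproperFwd P (elementaryIntegrand B s t) X L)
    (hX : ∀ ω, ContinuousOn (fun r => X r ω) (Icc 0 1)) (hs : 0 ≤ s) (hs1 : s < 1) {u : ℝ}
    (hu : u ∈ Icc 0 1) :
    L u =ᵐ[P] fun ω => B.indicator 1 ω * (X (max s (min u t)) ω - X s ω) := by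
  rcases hu.2.lt_or_eq with hu1 | rfl
  · exact hL.elementaryIntegrand_ae_eq_of_lt_one hX hs hs1 ⟨hu.1, hu1⟩
  obtain ⟨v, -, hv, hv1⟩ := exists_seq_strictMono_tendsto' (zero_lt_one' ℝ)
  have hvIio : Tendsto v atTop (𝓝[<] 1) :=
    tendsto_nhdsWithin_of_tendsto_nhds_of_eventually_within _ hv1 (.of_forall fun n => (hv n).2)
  have hvIcc : Tendsto v atTop (𝓝[Icc 0 1] 1) :=
    tendsto_nhdsWithin_of_tendsto_nhds_of_eventually_within _ hv1
      (.of_forall fun n => Ioo_subset_Icc_self (hv n))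
  have hclamp : MapsTo (fun u => max s (min u t)) (Icc 0 1) (Icc 0 1) := fun u hu =>
    ⟨hs.trans (le_max_left _ _), max_le hs1.le ((min_le_left _ _).trans hu.2)⟩
  filter_upwards [ae_all_iff.2 fun n => hL.elementaryIntegrand_ae_eq_of_lt_one hX hs hs1
    (Ioo_subset_Ico_self (hv n)), hL.2] with ω hLv hL1
  have hXclamp : ContinuousWithinAt (fun u => X (max s (min u t)) ω) (Icc 0 1) 1 :=
    ((hX ω).comp (by fun_prop) hclamp).continuousWithinAt ⟨zero_le_one, le_rfl⟩
  refine tendsto_nhds_unique (hL1.comp hvIio) ?_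
  simp only [Function.comp_def, hLv]
  exact ((hXclamp.tendsto.comp hvIcc).sub_const _).const_mul _

theorem measurable_predictableSigma_uncurry [m0 : MeasurableSpace Ω] {𝓕 : Filtration ℝ m0}
    {f : ℝ → Ω → ℝ} (hf : Adapted 𝓕 fun t => f t)
    (hlc : ∀ ω t, ContinuousWithinAt (fun s => f s ω) (Iio t) t) :
    Measurable[predictableSigma 𝓕] (Function.uncurry f) :=
  measurable_iff_comap_le.2 <| le_iSup₂_of_le f ⟨hf, hlc⟩ le_rfl

theorem adapted_elementaryIntegrand [m0 : MeasurableSpace Ω] {𝓕 : Filtration ℝ m0} {B : Set Ω}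
    {s : ℝ} (hB : MeasurableSet[𝓕 s] B) (t : ℝ) :
    Adapted 𝓕 (elementaryIntegrand B s t) := by
  intro r
  by_cases hr : r ∈ Ioc s t
  · have hon : elementaryIntegrand B s t r = B.indicator 1 := funext fun ω => indicator_of_mem hr _
    rw [hon]
    exact measurable_const.indicator (𝓕.mono hr.1.le B hB)
  · have hoff : elementaryIntegrand B s t r = 0 := funext fun ω => indicator_of_notMem hr _
    rw [hoff]
    exact measurable_const

theorem abs_elementaryIntegrand_le_one (B : Set Ω) (s t r : ℝ) (ω : Ω) :
    |elementaryIntegrand B s t r ω| ≤ 1 := by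
  simp only [elementaryIntegrand, indicator]
  split_ifs <;> norm_num

theorem setIntegral_eq_of_integral_indicator_mul_sub_eq_zero [MeasurableSpace Ω] {P : Measure Ω}
    {Y Z : Ω → ℝ} {B : Set Ω} (hB : MeasurableSet B) (hY : Integrable Y P) (hZ : Integrable Z P)
    (h : ∫ ω, B.indicator 1 ω * (Y ω - Z ω) ∂P = 0) :
    ∫ ω in B, Y ω ∂P = ∫ ω in B, Z ω ∂P := by
  have hind : (fun ω => B.indicator 1 ω * (Y ω - Z ω)) = B.indicator fun ω => Y ω - Z ω :=
    funext fun ω => by by_cases hω : ω ∈ B <;> simp [hω]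
  rwa [hind, integral_indicator hB, integral_sub hY.integrableOn hZ.integrableOn, sub_eq_zero] at h

end CR

open CR in
/-- if the class `A` contains all bounded processes that are measurable with
respect to the predictable σ-algebra of `𝓕`, and `X` is a continuous `A`-martingale
adapted to `𝓕` with `X_t` integrable for each `t ∈ [0,1]`, then `X` is an
`𝓕`-martingale (on `[0,1]`). -/
theorem stmt6_amartingale_is_martingale
    {Ω : Type*} [m0 : MeasurableSpace Ω] (P : Measure Ω) [IsProbabilityMeasure P]
    (𝓕 : Filtration ℝ m0) (A : Set (ℝ → Ω → ℝ))
    (hA : ∀ g : ℝ × Ω → ℝ, Measurable[predictableSigma 𝓕] g →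
      (∃ C, ∀ p, |g p| ≤ C) → (fun t ω => g (t, ω)) ∈ A)
    (X : ℝ → Ω → ℝ)
    (hXc : ∀ ω, ContinuousOn (fun t => X t ω) (Icc 0 1))
    (hXad : Adapted 𝓕 fun t => X t)
    (hXint : ∀ t ∈ Icc (0:ℝ) 1, Integrable (X t) P)
    (hAmart : IsAMartingale P A X) :
    ∀ s t : ℝ, 0 ≤ s → s ≤ t → t ≤ 1 → P[X t|𝓕 s] =ᵐ[P] X s := by
  intro s t hs hst ht1
  obtain rfl | hst' := hst.eq_or_lt
  · rw [condExp_of_stronglyMeasurable (𝓕.le s) (hXad s).stronglyMeasurable (hXint s ⟨hs, ht1⟩)]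
  have hs1 : s < 1 := hst'.trans_le ht1
  have ht : t ∈ Icc (0:ℝ) 1 := ⟨hs.trans hst, ht1⟩
  refine (ae_eq_condExp_of_forall_setIntegral_eq (𝓕.le s) (hXint t ht)
    (fun B _ _ => (hXint s ⟨hs, hs1.le⟩).integrableOn) (fun B hB _ => ?_)
    (hXad s).stronglyMeasurable.aestronglyMeasurable).symm
  obtain ⟨L, hL, hL0⟩ := hAmart _ (hA _
    (measurable_predictableSigma_uncurry (adapted_elementaryIntegrand hB t)
      fun ω r => continuousWithinAt_Iio_indicator_Ioc _ s t r)
    ⟨1, fun p => abs_elementaryIntegrand_le_one B s t p.1 p.2⟩)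
  have hLt := hL.elementaryIntegrand_ae_eq hXc hs hs1 ht
  rw [min_self, max_eq_right hst] at hLt
  refine (setIntegral_eq_of_integral_indicator_mul_sub_eq_zero (𝓕.le s B hB) (hXint t ht)
    (hXint s ⟨hs, hs1.le⟩) ?_).symm
  rw [← integral_congr_ae hLt]
  exact (hL0 t ht).2
end
end

section
/- Let ξ be a continuous finite quadratic variation process with ξ_0 = 0, and for θ ∈ A set L^θ = ∫_0^1 θ_t d⁻ξ_t − (1/2)∫_0^1 θ_t² d[ξ]_t. Then for any concave strictly increasing F with bounded derivative F', the map f(θ) = E[F(L^θ)] is concave on A; indeed for all θ, π ∈ A and λ ∈ [0,1], L^{π+λ(θ−π)} − L^π − λ(L^θ − L^π) = (1/2)λ(1−λ)∫_0^1 (θ_t − π_t)² d[ξ]_t ≥ 0. -/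
open MeasureTheory Filter Set Topology

noncomputable section

namespace CR

/-- `L^θ = ∫_0^1 θ d⁻ξ − ½ ∫_0^1 θ² d[ξ]`, where `Iξ θ` denotes the (improper) forward
integral `∫_0^1 θ d⁻ξ` and `ν ω` the Stieltjes measure of the quadratic variation
`[ξ](ω)`. -/
def Lfun {Ω : Type*} [MeasurableSpace Ω] (Iξ : (ℝ → Ω → ℝ) → Ω → ℝ)
    (ν : Ω → Measure ℝ) (θ : ℝ → Ω → ℝ) (ω : Ω) : ℝ :=
  Iξ θ ω - (1 / 2) * ∫ s in Ioc (0:ℝ) 1, (θ s ω) ^ 2 ∂(ν ω)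

end CR

/-!
Since `θ ↦ ∫ θ d⁻ξ` is linear, `L^θ` is an affine function of `θ` minus the quadratic form
`½ ∫ θ² d[ξ]`, and expanding the square shows that along a segment this form falls short of its
chord by exactly `½ λ(1-λ) ∫ (θ-π)² d[ξ] ≥ 0`. So `L` is pathwise concave in `θ`; composing with
the concave nondecreasing `F` keeps it concave, and since `F` is Lipschitz every `F(L^θ)` is
integrable, so the pathwise inequality survives taking expectations.
-/

section

variable {α : Type*} [MeasurableSpace α] {μ : Measure α}

theorem LipschitzWith.integrable_comp {E F : Type*} [NormedAddCommGroup E]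
    [NormedAddCommGroup F] [IsFiniteMeasure μ] {K : NNReal} {g : E → F}
    (hg : LipschitzWith K g) {f : α → E} (hf : Integrable f μ) : Integrable (g ∘ f) μ := by
  refine Integrable.mono' ((integrable_const ‖g 0‖).add (hf.norm.const_mul K))
    (hg.continuous.comp_aestronglyMeasurable hf.1) (Eventually.of_forall fun x => ?_)
  have hx := hg.norm_sub_le (f x) 0
  rw [sub_zero] at hx
  have := norm_sub_norm_le (g (f x)) (g 0)
  simp only [Function.comp_apply, Pi.add_apply]
  linarith

theorem memLp_restrict_of_abs_le [IsFiniteMeasure μ] {f : α → ℝ} (hf : Measurable f)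
    {s : Set α} (hs : MeasurableSet s) (hbdd : ∃ C, ∀ x ∈ s, |f x| ≤ C) (p : ENNReal) :
    MemLp f p (μ.restrict s) := by
  obtain ⟨C, hC⟩ := hbdd
  refine MemLp.of_bound hf.aestronglyMeasurable C ?_
  filter_upwards [ae_restrict_mem hs] with x hx
  exact hC x hx

theorem integral_convex_comb_sq {f g : α → ℝ} (hf : MemLp f 2 μ) (hg : MemLp g 2 μ) (l : ℝ) :
    ∫ x, ((1 - l) * g x + l * f x) ^ 2 ∂μ
      = (1 - l) * ∫ x, g x ^ 2 ∂μ + l * ∫ x, f x ^ 2 ∂μ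
        - l * (1 - l) * ∫ x, (f x - g x) ^ 2 ∂μ := by
  have hpointwise : (fun x => ((1 - l) * g x + l * f x) ^ 2)
      = fun x => ((1 - l) * g x ^ 2 + l * f x ^ 2) - l * (1 - l) * (f x - g x) ^ 2 := by
    funext x; ring
  have hf2 := hf.integrable_sq
  have hg2 := hg.integrable_sq
  have hfg2 : Integrable (fun x => (f x - g x) ^ 2) μ := (hf.sub hg).integrable_sq
  have hcomb : Integrable (fun x => (1 - l) * g x ^ 2 + l * f x ^ 2) μ :=
    (hg2.const_mul _).add (hf2.const_mul _)
  rw [hpointwise, integral_sub hcomb (hfg2.const_mul _),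
    integral_add (hg2.const_mul _) (hf2.const_mul _), integral_const_mul, integral_const_mul,
    integral_const_mul]

theorem integral_comp_le_of_concaveOn {F : ℝ → ℝ} (hconc : ConcaveOn ℝ univ F)
    (hmono : Monotone F) {X Y Z : α → ℝ} {l : ℝ} (hl0 : 0 ≤ l) (hl1 : l ≤ 1)
    (hX : Integrable (fun x => F (X x)) μ) (hY : Integrable (fun x => F (Y x)) μ)
    (hZ : Integrable (fun x => F (Z x)) μ) (hXYZ : ∀ x, l * X x + (1 - l) * Y x ≤ Z x) :
    l * ∫ x, F (X x) ∂μ + (1 - l) * ∫ x, F (Y x) ∂μ ≤ ∫ x, F (Z x) ∂μ := by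
  rw [← integral_const_mul, ← integral_const_mul,
    ← integral_add (hX.const_mul l) (hY.const_mul _)]
  refine integral_mono ((hX.const_mul l).add (hY.const_mul _)) hZ fun x => ?_
  calc l * F (X x) + (1 - l) * F (Y x) ≤ F (l * X x + (1 - l) * Y x) :=
        hconc.2 (mem_univ _) (mem_univ _) hl0 (sub_nonneg.2 hl1) (by ring)
    _ ≤ F (Z x) := hmono (hXYZ x)

end

theorem lipschitzWith_of_hasDerivAt_abs_le {F F' : ℝ → ℝ} (hF' : ∀ x, HasDerivAt F (F' x) x)
    {C : ℝ} (hC : ∀ x, |F' x| ≤ C) : LipschitzWith C.toNNReal F :=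
  lipschitzWith_of_nnnorm_deriv_le (fun x => (hF' x).differentiableAt) fun x => by
    rw [(hF' x).deriv, ← NNReal.coe_le_coe, coe_nnnorm, Real.coe_toNNReal _
      ((abs_nonneg _).trans (hC 0))]
    exact hC x

namespace CR

theorem Lfun_convex_comb_sub {Ω : Type*} [MeasurableSpace Ω] {Iξ : (ℝ → Ω → ℝ) → Ω → ℝ}
    {ν : Ω → Measure ℝ} {θ π : ℝ → Ω → ℝ} {l : ℝ} {ω : Ω}
    (hI : Iξ (fun t ω => (1 - l) * π t ω + l * θ t ω) ω = (1 - l) * Iξ π ω + l * Iξ θ ω)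
    (hθ : MemLp (fun s => θ s ω) 2 ((ν ω).restrict (Ioc 0 1)))
    (hπ : MemLp (fun s => π s ω) 2 ((ν ω).restrict (Ioc 0 1))) :
    Lfun Iξ ν (fun t ω => (1 - l) * π t ω + l * θ t ω) ω - Lfun Iξ ν π ω
        - l * (Lfun Iξ ν θ ω - Lfun Iξ ν π ω)
      = (1 / 2) * l * (1 - l) * ∫ s in Ioc (0:ℝ) 1, (θ s ω - π s ω) ^ 2 ∂(ν ω) := by
  simp only [Lfun]
  rw [hI, integral_convex_comb_sq hθ hπ]
  ring

end CR

open CR in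
theorem stmt14_concavity_general
    {Ω : Type*} [MeasurableSpace Ω] (P : Measure Ω) [IsProbabilityMeasure P]
    (A : Set (ℝ → Ω → ℝ))
    (hlin : ∀ θ ∈ A, ∀ η ∈ A, ∀ a b : ℝ, (fun t ω => a * θ t ω + b * η t ω) ∈ A)
    (hmeas : ∀ θ ∈ A, ∀ ω, Measurable fun s => θ s ω)
    (hbdd : ∀ θ ∈ A, ∀ ω, ∃ C, ∀ s ∈ Icc (0:ℝ) 1, |θ s ω| ≤ C)
    (ν : Ω → Measure ℝ) (hνfin : ∀ ω, IsFiniteMeasure (ν ω))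
    (Iξ : (ℝ → Ω → ℝ) → Ω → ℝ)
    (hIlin : ∀ θ ∈ A, ∀ η ∈ A, ∀ a b : ℝ, ∀ ω,
      Iξ (fun t ω => a * θ t ω + b * η t ω) ω = a * Iξ θ ω + b * Iξ η ω)
    (hint : ∀ θ ∈ A, Integrable (Iξ θ) P ∧
      Integrable (fun ω => ∫ s in Ioc (0:ℝ) 1, (θ s ω) ^ 2 ∂(ν ω)) P)
    (F F' : ℝ → ℝ)
    (hFconc : ∀ x y : ℝ, ∀ l : ℝ, 0 ≤ l → l ≤ 1 →
      l * F x + (1 - l) * F y ≤ F (l * x + (1 - l) * y))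
    (hFmono : StrictMono F)
    (hF' : ∀ x, HasDerivAt F (F' x) x) (hF'b : ∃ C, ∀ x, |F' x| ≤ C) :
    (∀ θ ∈ A, ∀ π ∈ A, ∀ l : ℝ, 0 ≤ l → l ≤ 1 → ∀ ω,
      Lfun Iξ ν (fun t ω => (1 - l) * π t ω + l * θ t ω) ω - Lfun Iξ ν π ω
          - l * (Lfun Iξ ν θ ω - Lfun Iξ ν π ω)
        = (1 / 2) * l * (1 - l) * ∫ s in Ioc (0:ℝ) 1, (θ s ω - π s ω) ^ 2 ∂(ν ω) ∧
      0 ≤ (1 / 2) * l * (1 - l) * ∫ s in Ioc (0:ℝ) 1, (θ s ω - π s ω) ^ 2 ∂(ν ω)) ∧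
    (∀ θ ∈ A, ∀ π ∈ A, ∀ l : ℝ, 0 ≤ l → l ≤ 1 →
      l * ∫ ω, F (Lfun Iξ ν θ ω) ∂P + (1 - l) * ∫ ω, F (Lfun Iξ ν π ω) ∂P
        ≤ ∫ ω, F (Lfun Iξ ν (fun t ω => l * θ t ω + (1 - l) * π t ω) ω) ∂P) := by
  obtain ⟨C, hC⟩ := hF'b
  have hFlip := lipschitzWith_of_hasDerivAt_abs_le hF' hC
  have hFconcave : ConcaveOn ℝ univ F := ⟨convex_univ, fun x _ y _ a b ha hb hab => by
    obtain rfl : b = 1 - a := by linarith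
    exact hFconc x y a ha (by linarith)⟩
  have hsq : ∀ θ ∈ A, ∀ ω, MemLp (fun s => θ s ω) 2 ((ν ω).restrict (Ioc 0 1)) :=
    fun θ hθ ω => haveI := hνfin ω
      memLp_restrict_of_abs_le (hmeas θ hθ ω) measurableSet_Ioc
        ((hbdd θ hθ ω).imp fun _ hC s hs => hC s (Ioc_subset_Icc_self hs)) 2
  have hgap : ∀ θ ∈ A, ∀ π ∈ A, ∀ l : ℝ, ∀ ω,
      Lfun Iξ ν (fun t ω => (1 - l) * π t ω + l * θ t ω) ω - Lfun Iξ ν π ω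
          - l * (Lfun Iξ ν θ ω - Lfun Iξ ν π ω)
        = (1 / 2) * l * (1 - l) * ∫ s in Ioc (0:ℝ) 1, (θ s ω - π s ω) ^ 2 ∂(ν ω) :=
    fun θ hθ π hπ l ω =>
      Lfun_convex_comb_sub (hIlin π hπ θ hθ (1 - l) l ω) (hsq θ hθ ω) (hsq π hπ ω)
  have hgap_nonneg : ∀ θ π : ℝ → Ω → ℝ, ∀ l : ℝ, 0 ≤ l → l ≤ 1 → ∀ ω,
      0 ≤ (1 / 2) * l * (1 - l) * ∫ s in Ioc (0:ℝ) 1, (θ s ω - π s ω) ^ 2 ∂(ν ω) :=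
    fun θ π l hl0 hl1 ω => mul_nonneg (by nlinarith) (integral_nonneg fun s => sq_nonneg _)
  have hFL : ∀ θ ∈ A, Integrable (fun ω => F (Lfun Iξ ν θ ω)) P :=
    fun θ hθ => hFlip.integrable_comp ((hint θ hθ).1.sub ((hint θ hθ).2.const_mul (1 / 2)))
  refine ⟨fun θ hθ π hπ l hl0 hl1 ω => ⟨hgap θ hθ π hπ l ω, hgap_nonneg θ π l hl0 hl1 ω⟩,
    fun θ hθ π hπ l hl0 hl1 => ?_⟩
  refine integral_comp_le_of_concaveOn hFconcave hFmono.monotone hl0 hl1 (hFL θ hθ) (hFL π hπ)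
    (hFL _ (hlin θ hθ π hπ l (1 - l))) fun ω => ?_
  have hswap : (fun t ω => l * θ t ω + (1 - l) * π t ω)
      = fun t ω => (1 - l) * π t ω + l * θ t ω := by
    funext t ω; ring
  rw [hswap]
  linarith [hgap θ hθ π hπ l ω, hgap_nonneg θ π l hl0 hl1 ω]

open CR in
/-- with `ξ` a continuous finite quadratic variation process, `ξ_0 = 0`,
and `L^θ = ∫_0^1 θ d⁻ξ − ½∫_0^1 θ² d[ξ]`, for any concave strictly increasing `F` with
bounded derivative `F'`, the map `f(θ) = E[F(L^θ)]` is concave on `A`; indeed for all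
`θ, π ∈ A` and `l ∈ [0,1]`,
`L^{π+l(θ−π)} − L^π − l(L^θ − L^π) = ½ l(1−l) ∫_0^1 (θ−π)² d[ξ] ≥ 0`. -/
theorem stmt14_concavity
    {Ω : Type*} [MeasurableSpace Ω] (P : Measure Ω) [IsProbabilityMeasure P]
    (A : Set (ℝ → Ω → ℝ))
    (hlin : ∀ θ ∈ A, ∀ η ∈ A, ∀ a b : ℝ, (fun t ω => a * θ t ω + b * η t ω) ∈ A)
    (hmeas : ∀ θ ∈ A, ∀ ω, Measurable fun s => θ s ω)
    (hbdd : ∀ θ ∈ A, ∀ ω, ∃ C, ∀ s ∈ Icc (0:ℝ) 1, |θ s ω| ≤ C)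
    (ξ : ℝ → Ω → ℝ)
    (hξc : ∀ ω, ContinuousOn (fun t => ξ t ω) (Icc 0 1)) (hξ0 : ∀ ω, ξ 0 ω = 0)
    (QV : ℝ → Ω → ℝ) (hQV : IsCovariation P ξ ξ 1 QV)
    (ν : Ω → Measure ℝ) (hνfin : ∀ ω, IsFiniteMeasure (ν ω))
    (hν : ∀ ω, ∀ a b : ℝ, 0 ≤ a → a ≤ b → b ≤ 1 →
      (ν ω (Ioc a b)).toReal = QV b ω - QV a ω)
    (Iξ : (ℝ → Ω → ℝ) → Ω → ℝ)
    (hIξ : ∀ θ ∈ A, ∃ L : ℝ → Ω → ℝ, IsImproperFwd P θ ξ L ∧ ∀ ω, L 1 ω = Iξ θ ω)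
    (hIlin : ∀ θ ∈ A, ∀ η ∈ A, ∀ a b : ℝ, ∀ ω,
      Iξ (fun t ω => a * θ t ω + b * η t ω) ω = a * Iξ θ ω + b * Iξ η ω)
    (hint : ∀ θ ∈ A, Integrable (Iξ θ) P ∧
      Integrable (fun ω => ∫ s in Ioc (0:ℝ) 1, (θ s ω) ^ 2 ∂(ν ω)) P)
    (F F' : ℝ → ℝ)
    (hFconc : ∀ x y : ℝ, ∀ l : ℝ, 0 ≤ l → l ≤ 1 →
      l * F x + (1 - l) * F y ≤ F (l * x + (1 - l) * y))
    (hFmono : StrictMono F)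
    (hF' : ∀ x, HasDerivAt F (F' x) x) (hF'b : ∃ C, ∀ x, |F' x| ≤ C) :
    (∀ θ ∈ A, ∀ π ∈ A, ∀ l : ℝ, 0 ≤ l → l ≤ 1 → ∀ ω,
      Lfun Iξ ν (fun t ω => (1 - l) * π t ω + l * θ t ω) ω - Lfun Iξ ν π ω
          - l * (Lfun Iξ ν θ ω - Lfun Iξ ν π ω)
        = (1 / 2) * l * (1 - l) * ∫ s in Ioc (0:ℝ) 1, (θ s ω - π s ω) ^ 2 ∂(ν ω) ∧
      0 ≤ (1 / 2) * l * (1 - l) * ∫ s in Ioc (0:ℝ) 1, (θ s ω - π s ω) ^ 2 ∂(ν ω)) ∧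
    (∀ θ ∈ A, ∀ π ∈ A, ∀ l : ℝ, 0 ≤ l → l ≤ 1 →
      l * ∫ ω, F (Lfun Iξ ν θ ω) ∂P + (1 - l) * ∫ ω, F (Lfun Iξ ν π ω) ∂P
        ≤ ∫ ω, F (Lfun Iξ ν (fun t ω => l * θ t ω + (1 - l) * π t ω) ω) ∂P) :=
  stmt14_concavity_general P A hlin hmeas hbdd ν hνfin Iξ hIlin hint F F' hFconc hFmono hF' hF'b
end
end

section
/- If there exists an A-martingale measure Q (a probability Q ∼ P under which the discounted price S̃ is an A-martingale), then the market is A-arbitrage free: there is no self-financing portfolio h ∈ A with terminal discounted wealth X̃_1 = ∫_0^1 h_t d⁻S̃_t satisfying P(X_1 ≥ 0) = 1 and P(X_1 > 0) > 0. -/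
open MeasureTheory Filter Set Topology

noncomputable section

/-!
Under `Q` the terminal wealth has mean zero. Forward integrals are limits in probability, and
such limits only depend on the null sets of the measure, so the wealth computed under `P` agrees
`Q`-a.s. with the one computed under `Q` at every `t < 1`, hence also at `t = 1`. A nonnegative
variable with zero `Q`-mean vanishes `Q`-a.s., hence `P`-a.s., so there is no arbitrage.
-/

section

variable {α ι E : Type*} [MeasurableSpace α] {μ P Q : Measure α}

theorem MeasureTheory.TendstoInMeasure.ae_eq_of_absolutelyContinuous [EMetricSpace E]
    {u : Filter ι} [u.NeBot] [u.IsCountablyGenerated] {f : ι → α → E} {g h : α → E}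
    (hQP : Q ≪ P) (hg : TendstoInMeasure P f u g) (hh : TendstoInMeasure Q f u h) :
    g =ᵐ[Q] h := by
  obtain ⟨ns, hns, hg_ae⟩ := hg.exists_seq_tendsto_ae'
  obtain ⟨ms, hms, hh_ae⟩ := (hh.comp hns).exists_seq_tendsto_ae'
  filter_upwards [hQP.ae_le hg_ae, hh_ae] with ω hgω hhω
  exact tendsto_nhds_unique (hgω.comp hms) hhω

theorem ae_eq_of_tendsto_of_eventually_ae_eq [TopologicalSpace E] [T2Space E]
    {l : Filter ι} [l.NeBot] [l.IsCountablyGenerated] {X Y : ι → α → E} {x y : α → E}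
    (hXY : ∀ᶠ t in l, X t =ᵐ[μ] Y t) (hX : ∀ᵐ ω ∂μ, Tendsto (X · ω) l (𝓝 (x ω)))
    (hY : ∀ᵐ ω ∂μ, Tendsto (Y · ω) l (𝓝 (y ω))) : x =ᵐ[μ] y := by
  obtain ⟨ts, hts⟩ := exists_seq_tendsto l
  obtain ⟨N, hN⟩ := eventually_atTop.1 (hts.eventually hXY)
  have hagree : ∀ᵐ ω ∂μ, ∀ n, X (ts (n + N)) ω = Y (ts (n + N)) ω :=
    ae_all_iff.2 fun n => hN (n + N) (Nat.le_add_left N n)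
  have hts' : Tendsto (fun n => ts (n + N)) atTop l := hts.comp (tendsto_add_atTop_nat N)
  filter_upwards [hX, hY, hagree] with ω hXω hYω hω
  exact tendsto_nhds_unique ((hXω.comp hts').congr hω) (hYω.comp hts')

end

namespace CR

variable {Ω : Type*} [MeasurableSpace Ω] {P Q : Measure Ω}

theorem IsImproperFwd.ae_eq_one_of_absolutelyContinuous {θ M L L' : ℝ → Ω → ℝ}
    (hQP : Q ≪ P) (hL : IsImproperFwd P θ M L) (hL' : IsImproperFwd Q θ M L') :
    L 1 =ᵐ[Q] L' 1 := by
  have hagree : ∀ t ∈ Ico (0 : ℝ) 1, L t =ᵐ[Q] L' t := fun t ht =>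
    ((hL.1 t ht).2 t ⟨ht.1, le_rfl⟩).ae_eq_of_absolutelyContinuous hQP
      ((hL'.1 t ht).2 t ⟨ht.1, le_rfl⟩)
  exact ae_eq_of_tendsto_of_eventually_ae_eq
    (eventually_mem_set.2 (Ico_mem_nhdsLT zero_lt_one) |>.mono hagree)
    (hQP.ae_le hL.2) hL'.2

end CR

open CR in
theorem stmt16_no_arbitrage_general
    {Ω : Type*} [MeasurableSpace Ω] (P Q : Measure Ω)
    (hQP : Q ≪ P) (hPQ : P ≪ Q)
    (A : Set (ℝ → Ω → ℝ)) (Stilde : ℝ → Ω → ℝ)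
    (hmart : IsAMartingale Q A Stilde) :
    ¬ ∃ h ∈ A, ∃ X : ℝ → Ω → ℝ, IsImproperFwd P h Stilde X ∧
        (∀ᵐ ω ∂P, 0 ≤ X 1 ω) ∧ 0 < P {ω | 0 < X 1 ω} := by
  rintro ⟨h, hA, X, hX, hnonneg, hpos⟩
  obtain ⟨L, hL, hmean⟩ := hmart h hA
  have hXL : X 1 =ᵐ[Q] L 1 := hX.ae_eq_one_of_absolutelyContinuous hQP hL
  obtain ⟨hint, hzero⟩ := hmean 1 ⟨zero_le_one, le_rfl⟩
  have hL_nonneg : 0 ≤ᵐ[Q] L 1 := by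
    filter_upwards [hQP.ae_le hnonneg, hXL] with ω hω hω' using hω' ▸ hω
  have hX_zero : X 1 =ᵐ[P] 0 :=
    hPQ.ae_le (hXL.trans ((integral_eq_zero_iff_of_nonneg_ae hL_nonneg hint).1 hzero))
  exact hpos.ne' (measure_mono_null (fun ω (hω : 0 < X 1 ω) => hω.ne') (ae_iff.1 hX_zero))

open CR in
/-- if there exists an `A`-martingale measure `Q` (a probability `Q ∼ P`
under which the discounted price `S̃` is an `A`-martingale), then the market is
`A`-arbitrage free: there is no `h ∈ A` whose discounted wealth
`X̃ = ∫_0^· h d⁻S̃` satisfies `X̃_1 ≥ 0` a.s. and `P(X̃_1 > 0) > 0`. -/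
theorem stmt16_no_arbitrage
    {Ω : Type*} [MeasurableSpace Ω] (P Q : Measure Ω)
    [IsProbabilityMeasure P] [IsProbabilityMeasure Q]
    (hQP : Q ≪ P) (hPQ : P ≪ Q)
    (A : Set (ℝ → Ω → ℝ)) (Stilde : ℝ → Ω → ℝ)
    (hmart : IsAMartingale Q A Stilde) :
    ¬ ∃ h ∈ A, ∃ X : ℝ → Ω → ℝ, IsImproperFwd P h Stilde X ∧
        (∀ᵐ ω ∂P, 0 ≤ X 1 ω) ∧ 0 < P {ω | 0 < X 1 ω} :=
  stmt16_no_arbitrage_general P Q hQP hPQ A Stilde hmart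
end
end

section
/- Suppose there exists an A-martingale measure Q with G_0 trivial. If Q and Q₁ are two A-martingale measures, then E^Q[C̃] = E^{Q₁}[C̃] for every A-attainable contingent claim C (C̃ denoting the discounted claim). In particular, if the market is (A,L)-complete and L is an algebra, all A-martingale measures coincide on the σ-algebra generated by all bounded discounted contingent claims in L. -/
open MeasureTheory Filter Set Topology

noncomputable section

/-!
Under an `A`-martingale measure `Q ≪ P`, uniqueness of limits in probability identifies the
`P`-forward integral of a strategy `Q`-a.s. with the one built under `Q`, whose mean is zero; so
an attainable claim has `Q`-mean equal to its initial capital, whatever `Q` is.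

If every bounded claim of the algebra `𝓛` is attainable, `Q` and `Q₁` thus give the same mean
to every polynomial in finitely many bounded claims `f₁, …, fₙ`. These polynomials are
point-separating bounded continuous functions of `(f₁, …, fₙ)`, which takes values in a compact
cube, so the joint laws of `(f₁, …, fₙ)` agree. A π-λ argument extends the equality to the
generated σ-algebra; it runs over null-measurable sets, since claims are only a.e. measurable.
-/

namespace CR

variable {Ω : Type*}

def boundedPart (𝓛 : Set (Ω → ℝ)) : Set (Ω → ℝ) :=
  {C | C ∈ 𝓛 ∧ ∃ M : ℝ, ∀ ω, |C ω| ≤ M}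

theorem boundedPart_mul_mem {𝓛 : Set (Ω → ℝ)}
    (hmul : ∀ f ∈ 𝓛, ∀ g ∈ 𝓛, (fun ω => f ω * g ω) ∈ 𝓛) :
    ∀ f ∈ boundedPart 𝓛, ∀ g ∈ boundedPart 𝓛, (fun ω => f ω * g ω) ∈ boundedPart 𝓛 := by
  rintro f ⟨hf, Mf, hMf⟩ g ⟨hg, Mg, hMg⟩
  refine ⟨hmul f hf g hg, Mf * Mg, fun ω => ?_⟩
  rw [abs_mul]
  exact mul_le_mul (hMf ω) (hMg ω) (abs_nonneg _) ((abs_nonneg _).trans (hMf ω))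

theorem boundedPart_linear_mem {𝓛 : Set (Ω → ℝ)}
    (hlin : ∀ f ∈ 𝓛, ∀ g ∈ 𝓛, ∀ a b : ℝ, (fun ω => a * f ω + b * g ω) ∈ 𝓛) :
    ∀ f ∈ boundedPart 𝓛, ∀ g ∈ boundedPart 𝓛, ∀ a b : ℝ,
      (fun ω => a * f ω + b * g ω) ∈ boundedPart 𝓛 := by
  rintro f ⟨hf, Mf, hMf⟩ g ⟨hg, Mg, hMg⟩ a b
  refine ⟨hlin f hf g hg a b, |a| * Mf + |b| * Mg, fun ω => ?_⟩
  calc |a * f ω + b * g ω| ≤ |a| * |f ω| + |b| * |g ω| := by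
        simpa only [abs_mul] using abs_add_le (a * f ω) (b * g ω)
    _ ≤ |a| * Mf + |b| * Mg := by gcongr <;> simp only [hMf, hMg]

theorem exists_eq_iInter_preimage_of_mem_piiUnionInter {S : Set (Ω → ℝ)}
    {t : Set Ω} (ht : t ∈ piiUnionInter (fun g => {u | MeasurableSet[(borel ℝ).comap g] u}) S) :
    ∃ pt : Finset (Ω → ℝ), ↑pt ⊆ S ∧ ∃ B : (Ω → ℝ) → Set ℝ,
      (∀ g ∈ pt, MeasurableSet (B g)) ∧ t = ⋂ g : pt, (g : Ω → ℝ) ⁻¹' B g := by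
  obtain ⟨pt, hpt, ft, hft, rfl⟩ := ht
  have hpre : ∀ g ∈ pt, ∃ B : Set ℝ, MeasurableSet B ∧ g ⁻¹' B = ft g := fun g hg =>
    MeasurableSpace.measurableSet_comap.1 (hft g hg)
  choose! B hB hBft using hpre
  refine ⟨pt, hpt, B, hB, ?_⟩
  rw [iInter_congr fun g : pt => hBft g g.2]
  ext ω
  simp

variable [MeasurableSpace Ω] {P Q Q₁ : Measure Ω}

theorem tendstoInMeasure_ae_unique_of_absolutelyContinuous {ι E : Type*} [EMetricSpace E]
    {u : Filter ι} [NeBot u] [IsCountablyGenerated u] {f : ι → Ω → E} {g g' : Ω → E}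
    (hQP : Q ≪ P) (hg : TendstoInMeasure P f u g) (hg' : TendstoInMeasure Q f u g') :
    g =ᵐ[Q] g' := by
  obtain ⟨ns, hns, hns_ae⟩ := hg.exists_seq_tendsto_ae'
  obtain ⟨ns', hns', hns'_ae⟩ := (hg'.comp hns).exists_seq_tendsto_ae'
  filter_upwards [hQP.ae_le hns_ae, hns'_ae] with ω hω hω'
  exact tendsto_nhds_unique (hω.comp hns') hω'

theorem ae_eq_of_eventually_ae_eq_of_tendsto {ι E : Type*} [TopologicalSpace E] [T2Space E]
    {l : Filter ι} [NeBot l] [IsCountablyGenerated l] {L L' : ι → Ω → E} {x x' : Ω → E}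
    (heq : ∀ᶠ t in l, L t =ᵐ[Q] L' t)
    (hL : ∀ᵐ ω ∂Q, Tendsto (fun t => L t ω) l (𝓝 (x ω)))
    (hL' : ∀ᵐ ω ∂Q, Tendsto (fun t => L' t ω) l (𝓝 (x' ω))) :
    x =ᵐ[Q] x' := by
  obtain ⟨ns, hns, hns_eq⟩ := exists_seq_forall_of_frequently heq.frequently
  filter_upwards [hL, hL', ae_all_iff.2 hns_eq] with ω hω hω' hω_eq
  exact tendsto_nhds_unique ((hω.comp hns).congr hω_eq) (hω'.comp hns)

theorem IsForwardIntegral.ae_eq_of_absolutelyContinuous {Y X L L' : ℝ → Ω → ℝ} {T : ℝ}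
    (hQP : Q ≪ P) (hL : IsForwardIntegral P Y X T L) (hL' : IsForwardIntegral Q Y X T L')
    {t : ℝ} (ht : t ∈ Icc 0 T) : L t =ᵐ[Q] L' t :=
  tendstoInMeasure_ae_unique_of_absolutelyContinuous hQP (hL.2 t ht) (hL'.2 t ht)

theorem IsImproperFwd.ae_eq_of_absolutelyContinuous {θ X L L' : ℝ → Ω → ℝ}
    (hQP : Q ≪ P) (hL : IsImproperFwd P θ X L) (hL' : IsImproperFwd Q θ X L') :
    L 1 =ᵐ[Q] L' 1 := by
  refine ae_eq_of_eventually_ae_eq_of_tendsto ?_ (hQP.ae_le hL.2) hL'.2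
  filter_upwards [Ico_mem_nhdsLT (zero_lt_one' ℝ)] with t ht
  exact (hL.1 t ht).ae_eq_of_absolutelyContinuous hQP (hL'.1 t ht) ⟨ht.1, le_rfl⟩

def IsAttainable (P : Measure Ω) (A : Set (ℝ → Ω → ℝ)) (S : ℝ → Ω → ℝ) (C : Ω → ℝ) : Prop :=
  ∃ x₀ : ℝ, ∃ h ∈ A, ∃ L : ℝ → Ω → ℝ, IsImproperFwd P h S L ∧ ∀ᵐ ω ∂P, x₀ + L 1 ω = C ω

theorem integrable_and_integral_eq_of_replicates [IsProbabilityMeasure Q]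
    {A : Set (ℝ → Ω → ℝ)} {S : ℝ → Ω → ℝ} (hQP : Q ≪ P) (hQ : IsAMartingale Q A S)
    {C : Ω → ℝ} {x₀ : ℝ} {h L : ℝ → Ω → ℝ} (hA : h ∈ A) (hL : IsImproperFwd P h S L)
    (hC : ∀ᵐ ω ∂P, x₀ + L 1 ω = C ω) :
    Integrable C Q ∧ ∫ ω, C ω ∂Q = x₀ := by
  obtain ⟨L', hL', hL'_mean⟩ := hQ h hA
  obtain ⟨hL'_int, hL'_zero⟩ := hL'_mean 1 ⟨zero_le_one, le_rfl⟩
  have hC' : (fun ω => x₀ + L' 1 ω) =ᵐ[Q] C := by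
    filter_upwards [hQP.ae_le hC, hL.ae_eq_of_absolutelyContinuous hQP hL'] with ω hω hLω
    rw [← hω, hLω]
  have h_int : Integrable (fun ω => x₀ + L' 1 ω) Q := (integrable_const x₀).add hL'_int
  refine ⟨h_int.congr hC', ?_⟩
  rw [← integral_congr_ae hC', integral_add (integrable_const x₀) hL'_int, hL'_zero]
  simp

theorem IsAttainable.integrable [IsProbabilityMeasure Q]
    {A : Set (ℝ → Ω → ℝ)} {S : ℝ → Ω → ℝ} (hQP : Q ≪ P) (hQ : IsAMartingale Q A S)
    {C : Ω → ℝ} (hC : IsAttainable P A S C) : Integrable C Q := by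
  obtain ⟨x₀, h, hA, L, hL, hCL⟩ := hC
  exact (integrable_and_integral_eq_of_replicates hQP hQ hA hL hCL).1

theorem IsAttainable.integral_eq [IsProbabilityMeasure Q]
    [IsProbabilityMeasure Q₁] {A : Set (ℝ → Ω → ℝ)} {S : ℝ → Ω → ℝ}
    (hQP : Q ≪ P) (hQ : IsAMartingale Q A S) (hQ₁P : Q₁ ≪ P) (hQ₁ : IsAMartingale Q₁ A S)
    {C : Ω → ℝ} (hC : IsAttainable P A S C) : ∫ ω, C ω ∂Q = ∫ ω, C ω ∂Q₁ := by
  obtain ⟨x₀, h, hA, L, hL, hCL⟩ := hC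
  rw [(integrable_and_integral_eq_of_replicates hQP hQ hA hL hCL).2,
    (integrable_and_integral_eq_of_replicates hQ₁P hQ₁ hA hL hCL).2]

theorem measure_eq_of_isPiSystem_of_nullMeasurableSet [IsFiniteMeasure Q]
    [IsFiniteMeasure Q₁] {C : Set (Set Ω)} (hC : IsPiSystem C)
    (hnull : ∀ t ∈ C, NullMeasurableSet t Q ∧ NullMeasurableSet t Q₁)
    (heq : ∀ t ∈ C, Q t = Q₁ t) (huniv : Q univ = Q₁ univ)
    {s : Set Ω} (hs : MeasurableSet[MeasurableSpace.generateFrom C] s) : Q s = Q₁ s := by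
  refine (MeasurableSpace.induction_on_inter (m := MeasurableSpace.generateFrom C)
    (C := fun t _ => NullMeasurableSet t Q ∧ NullMeasurableSet t Q₁ ∧ Q t = Q₁ t) rfl hC
    ⟨.empty, .empty, by simp⟩ (fun t ht => ⟨(hnull t ht).1, (hnull t ht).2, heq t ht⟩)
    ?_ ?_ s hs).2.2
  · rintro t - ⟨htQ, htQ₁, ht⟩
    refine ⟨htQ.compl, htQ₁.compl, ?_⟩
    rw [measure_compl₀ htQ (measure_ne_top _ _), measure_compl₀ htQ₁ (measure_ne_top _ _), ht,
      huniv]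
  · rintro g hd - hg
    refine ⟨.iUnion fun i => (hg i).1, .iUnion fun i => (hg i).2.1, ?_⟩
    rw [measure_iUnion₀ (fun i j hij => (hd hij).aedisjoint) fun i => (hg i).1,
      measure_iUnion₀ (fun i j hij => (hd hij).aedisjoint) fun i => (hg i).2.1]
    exact tsum_congr fun i => (hg i).2.2

section LawsOfAlgebra

open BoundedContinuousFunction

variable [IsProbabilityMeasure Q] [IsProbabilityMeasure Q₁] {S : Set (Ω → ℝ)}

theorem map_eq_of_integral_eq_of_separatesPoints {E : Type*} [TopologicalSpace E] [PolishSpace E]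
    [MeasurableSpace E] [BorelSpace E]
    (h0 : 0 ∈ S) (hmul : ∀ f ∈ S, ∀ g ∈ S, (fun ω => f ω * g ω) ∈ S)
    (hlin : ∀ f ∈ S, ∀ g ∈ S, ∀ a b : ℝ, (fun ω => a * f ω + b * g ω) ∈ S)
    (hS : ∀ g ∈ S, Integrable g Q ∧ Integrable g Q₁ ∧ ∫ ω, g ω ∂Q = ∫ ω, g ω ∂Q₁)
    {F : Ω → E} (hFQ : AEMeasurable F Q) (hFQ₁ : AEMeasurable F Q₁)
    (hsep : ∀ x y, x ≠ y → ∃ a : E →ᵇ ℝ, (∃ c : ℝ, ∃ g ∈ S, ∀ ω, a (F ω) = c + g ω) ∧ a x ≠ a y) :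
    Q.map F = Q₁.map F := by
  let 𝒜 : StarSubalgebra ℝ (E →ᵇ ℝ) :=
    { carrier := {a | ∃ c : ℝ, ∃ g ∈ S, ∀ ω, a (F ω) = c + g ω}
      mul_mem' := by
        rintro a b ⟨c, g, hg, ha⟩ ⟨d, k, hk, hb⟩
        refine ⟨c * d, _, hlin _ (hlin _ hg _ hk d c) _ (hmul _ hg _ hk) 1 1, fun ω => ?_⟩
        simp only [coe_mul, Pi.mul_apply, ha, hb]
        ring
      add_mem' := by
        rintro a b ⟨c, g, hg, ha⟩ ⟨d, k, hk, hb⟩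
        refine ⟨c + d, _, hlin _ hg _ hk 1 1, fun ω => ?_⟩
        simp only [coe_add, Pi.add_apply, ha, hb]
        ring
      algebraMap_mem' := fun r => ⟨r, 0, h0, fun ω => by simp⟩
      star_mem' := fun ha => ha }
  refine ext_of_forall_mem_subalgebra_integral_eq_of_polish (A := 𝒜) ?_ ?_
  · intro x y hxy
    obtain ⟨a, ha, hne⟩ := hsep x y hxy
    exact ⟨a, ⟨a.toContinuousMap, ⟨a, ha, rfl⟩, rfl⟩, hne⟩
  · rintro a ⟨c, g, hg, ha⟩
    obtain ⟨hgQ, hgQ₁, hg_eq⟩ := hS g hg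
    rw [integral_map hFQ a.continuous.aestronglyMeasurable,
      integral_map hFQ₁ a.continuous.aestronglyMeasurable]
    simp only [ha]
    rw [integral_add (integrable_const c) hgQ, integral_add (integrable_const c) hgQ₁, hg_eq]
    simp

theorem measure_iInter_preimage_eq_of_integral_eq {ι : Type*} [Fintype ι]
    (hmul : ∀ f ∈ S, ∀ g ∈ S, (fun ω => f ω * g ω) ∈ S)
    (hlin : ∀ f ∈ S, ∀ g ∈ S, ∀ a b : ℝ, (fun ω => a * f ω + b * g ω) ∈ S)
    (hS : ∀ g ∈ S, Integrable g Q ∧ Integrable g Q₁ ∧ ∫ ω, g ω ∂Q = ∫ ω, g ω ∂Q₁)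
    {f : ι → Ω → ℝ} (hfS : ∀ i, f i ∈ S) {M : ι → ℝ} (hM : ∀ i ω, |f i ω| ≤ M i)
    {B : ι → Set ℝ} (hB : ∀ i, MeasurableSet (B i)) :
    Q (⋂ i, f i ⁻¹' B i) = Q₁ (⋂ i, f i ⁻¹' B i) := by
  rcases isEmpty_or_nonempty ι with hι | ⟨⟨i₀⟩⟩
  · simp
  have h0 : (0 : Ω → ℝ) ∈ S := by simpa [← Pi.zero_def] using hlin _ (hfS i₀) _ (hfS i₀) 0 0
  let F : Ω → ((i : ι) → Icc (-M i) (M i)) := fun ω i => ⟨f i ω, abs_le.1 (hM i ω)⟩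
  have hF : ∀ μ : Measure Ω, (∀ i, Integrable (f i) μ) → AEMeasurable F μ := fun μ hμ =>
    aemeasurable_pi_lambda _ fun i => (hμ i).aemeasurable.subtype_mk
  have hFQ := hF Q fun i => (hS _ (hfS i)).1
  have hFQ₁ := hF Q₁ fun i => (hS _ (hfS i)).2.1
  have hmap : Q.map F = Q₁.map F := by
    refine map_eq_of_integral_eq_of_separatesPoints h0 hmul hlin hS hFQ hFQ₁ fun x y hxy => ?_
    obtain ⟨i, hi⟩ := Function.ne_iff.1 hxy
    refine ⟨mkOfCompact ⟨fun x => (x i : ℝ), by fun_prop⟩, ⟨0, f i, hfS i, fun ω => ?_⟩,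
      fun h => hi (Subtype.ext h)⟩
    simp [F]
  have hset : ⋂ i, f i ⁻¹' B i = F ⁻¹' univ.pi fun i => Subtype.val ⁻¹' B i := by
    ext ω
    simp [F]
  have hmeas : MeasurableSet (univ.pi fun i => (Subtype.val ⁻¹' B i : Set (Icc (-M i) (M i)))) :=
    MeasurableSet.univ_pi fun i => measurable_subtype_coe (hB i)
  rw [hset, ← Measure.map_apply_of_aemeasurable hFQ hmeas, hmap,
    Measure.map_apply_of_aemeasurable hFQ₁ hmeas]

theorem measure_eq_on_iSup_comap_of_integral_eq
    (hmul : ∀ f ∈ S, ∀ g ∈ S, (fun ω => f ω * g ω) ∈ S)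
    (hlin : ∀ f ∈ S, ∀ g ∈ S, ∀ a b : ℝ, (fun ω => a * f ω + b * g ω) ∈ S)
    (hS : ∀ g ∈ S, Integrable g Q ∧ Integrable g Q₁ ∧ ∫ ω, g ω ∂Q = ∫ ω, g ω ∂Q₁)
    (hbdd : ∀ g ∈ S, ∃ M, ∀ ω, |g ω| ≤ M) {s : Set Ω}
    (hs : MeasurableSet[⨆ g ∈ S, (borel ℝ).comap g] s) : Q s = Q₁ s := by
  rw [← generateFrom_piiUnionInter_measurableSet] at hs
  choose! M hM using hbdd
  refine measure_eq_of_isPiSystem_of_nullMeasurableSet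
    (isPiSystem_piiUnionInter _
      (fun g => @MeasurableSpace.isPiSystem_measurableSet Ω ((borel ℝ).comap g)) S)
    ?_ ?_ (by simp) hs <;>
  intro t ht <;>
  obtain ⟨pt, hpt, B, hB, rfl⟩ := exists_eq_iInter_preimage_of_mem_piiUnionInter ht
  · have hnull (μ : Measure Ω) (hμ : ∀ g ∈ S, Integrable g μ) :
        NullMeasurableSet (⋂ g : pt, (g : Ω → ℝ) ⁻¹' B g) μ :=
      .iInter fun g => (hμ g (hpt g.2)).aemeasurable.nullMeasurable (hB g g.2)
    exact ⟨hnull Q fun g hg => (hS g hg).1, hnull Q₁ fun g hg => (hS g hg).2.1⟩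
  · exact measure_iInter_preimage_eq_of_integral_eq hmul hlin hS
      (f := fun g : pt => (g : Ω → ℝ)) (fun g => hpt g.2) (fun g => hM g (hpt g.2))
      fun g => hB g g.2

end LawsOfAlgebra

end CR

open CR in
theorem stmt18_martingale_measures_agree_general
    {Ω : Type*} [MeasurableSpace Ω] (P Q Q₁ : Measure Ω)
    [IsProbabilityMeasure Q] [IsProbabilityMeasure Q₁]
    (A : Set (ℝ → Ω → ℝ)) (Stilde : ℝ → Ω → ℝ)
    (hQ : Q ≪ P ∧ P ≪ Q ∧ IsAMartingale Q A Stilde)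
    (hQ₁ : Q₁ ≪ P ∧ P ≪ Q₁ ∧ IsAMartingale Q₁ A Stilde)
    (𝓛 : Set (Ω → ℝ)) :
    (∀ Ctil : Ω → ℝ,
      (∃ x0 : ℝ, ∃ h ∈ A, ∃ L : ℝ → Ω → ℝ, IsImproperFwd P h Stilde L ∧
          ∀ᵐ ω ∂P, x0 + L 1 ω = Ctil ω) →
      ∫ ω, Ctil ω ∂Q = ∫ ω, Ctil ω ∂Q₁) ∧
    (((∀ Ctil ∈ 𝓛, ∃ x0 : ℝ, ∃ h ∈ A, ∃ L : ℝ → Ω → ℝ,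
          IsImproperFwd P h Stilde L ∧ ∀ᵐ ω ∂P, x0 + L 1 ω = Ctil ω) ∧
        (∀ Ctil ∈ 𝓛, ∀ Dtil ∈ 𝓛, (fun ω => Ctil ω * Dtil ω) ∈ 𝓛) ∧
        (∀ Ctil ∈ 𝓛, ∀ Dtil ∈ 𝓛, ∀ a b : ℝ,
          (fun ω => a * Ctil ω + b * Dtil ω) ∈ 𝓛)) →
      ∀ s : Set Ω,
        MeasurableSet[⨆ (Ctil : Ω → ℝ)
          (_ : Ctil ∈ 𝓛 ∧ ∃ M : ℝ, ∀ ω, |Ctil ω| ≤ M),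
          MeasurableSpace.comap Ctil (borel ℝ)] s →
        Q s = Q₁ s) := by
  obtain ⟨hQP, -, hQm⟩ := hQ
  obtain ⟨hQ₁P, -, hQ₁m⟩ := hQ₁
  refine ⟨fun _ => IsAttainable.integral_eq hQP hQm hQ₁P hQ₁m, ?_⟩
  rintro ⟨hcomplete, hmul, hlin⟩ s hs
  refine measure_eq_on_iSup_comap_of_integral_eq (S := boundedPart 𝓛)
    (boundedPart_mul_mem hmul) (boundedPart_linear_mem hlin) (fun C hC => ?_) (fun C hC => hC.2) hs
  have hC' : IsAttainable P A Stilde C := hcomplete C hC.1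
  exact ⟨hC'.integrable hQP hQm, hC'.integrable hQ₁P hQ₁m, hC'.integral_eq hQP hQm hQ₁P hQ₁m⟩

open CR in
/-- with `𝓖₀` trivial (so replication prices are constants), if `Q` and
`Q₁` are two `A`-martingale measures then `E^Q[C̃] = E^{Q₁}[C̃]` for every `A`-attainable
(discounted) contingent claim `C̃`.  In particular, if the market is `(A,𝓛)`-complete and
`𝓛` is an algebra, all `A`-martingale measures coincide on the σ-algebra generated by the
bounded (discounted) contingent claims in `𝓛`. -/
theorem stmt18_martingale_measures_agree
    {Ω : Type*} [MeasurableSpace Ω] (P Q Q₁ : Measure Ω)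
    [IsProbabilityMeasure P] [IsProbabilityMeasure Q] [IsProbabilityMeasure Q₁]
    (A : Set (ℝ → Ω → ℝ)) (Stilde : ℝ → Ω → ℝ)
    (hQ : Q ≪ P ∧ P ≪ Q ∧ IsAMartingale Q A Stilde)
    (hQ₁ : Q₁ ≪ P ∧ P ≪ Q₁ ∧ IsAMartingale Q₁ A Stilde)
    (𝓛 : Set (Ω → ℝ)) :
    (∀ Ctil : Ω → ℝ,
      (∃ x0 : ℝ, ∃ h ∈ A, ∃ L : ℝ → Ω → ℝ, IsImproperFwd P h Stilde L ∧
          ∀ᵐ ω ∂P, x0 + L 1 ω = Ctil ω) →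
      ∫ ω, Ctil ω ∂Q = ∫ ω, Ctil ω ∂Q₁) ∧
    (((∀ Ctil ∈ 𝓛, ∃ x0 : ℝ, ∃ h ∈ A, ∃ L : ℝ → Ω → ℝ,
          IsImproperFwd P h Stilde L ∧ ∀ᵐ ω ∂P, x0 + L 1 ω = Ctil ω) ∧
        (∀ Ctil ∈ 𝓛, ∀ Dtil ∈ 𝓛, (fun ω => Ctil ω * Dtil ω) ∈ 𝓛) ∧
        (∀ Ctil ∈ 𝓛, ∀ Dtil ∈ 𝓛, ∀ a b : ℝ,
          (fun ω => a * Ctil ω + b * Dtil ω) ∈ 𝓛)) →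
      ∀ s : Set Ω,
        MeasurableSet[⨆ (Ctil : Ω → ℝ)
          (_ : Ctil ∈ 𝓛 ∧ ∃ M : ℝ, ∀ ω, |Ctil ω| ≤ M),
          MeasurableSpace.comap Ctil (borel ℝ)] s →
        Q s = Q₁ s) :=
  stmt18_martingale_measures_agree_general P Q Q₁ A Stilde hQ hQ₁ 𝓛
end
end
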